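/- arXiv:1507.01614 — 4 statements merged into one kernel-verified Lean document; each statement's English description precedes it below -/
import Mathlib

section
/- Let F be a real n×n matrix and t ∈ ℝ with |t| · ‖F‖ < 1, where ‖F‖ denotes the operator norm of F as a linear map on Euclidean ℝⁿ. Then det(I + tF) > 0 and log det(I + tF) = Σ_{r=1}^∞ ((−1)^{r+1}/r) · tr(F^r) · t^r, where the series on the right converges absolutely. -/
/-!
Let `μ` run through the complex eigenvalues of `F`, i.e. the roots of its characteristic
polynomial counted with multiplicity. Factoring a polynomial `p` into linear factors gives
`det p(F) = ∏ p(μ)`, hence `charpoly p(F) = ∏ (X - p(μ))`; in particular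
`det (1 + tF) = ∏ (1 + tμ)` and `tr (Fʳ) = ∑ μʳ`. Splitting complex vectors into real and
imaginary parts shows `|μ| ≤ ‖F‖`, so `|tμ| < 1`. Summing the Taylor series of `log (1 + tμ)`
over `μ` gives `L := ∑ log (1 + tμ)`, with `exp L = det (1 + tF)`, as the sum of the series with
the real terms `(-1)ʳ⁺¹/r · tr (Fʳ) tʳ`. So `L` is real, `det (1 + tF) = exp L > 0` and
`log det (1 + tF) = L`.
-/

open Matrix Polynomial

theorem EuclideanSpace.norm_sq_eq_norm_sq_re_add_norm_sq_im {n : Type*} [Fintype n]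
    (w : EuclideanSpace ℂ n) :
    ‖w‖ ^ 2 = ‖WithLp.toLp 2 fun i => (w i).re‖ ^ 2 + ‖WithLp.toLp 2 fun i => (w i).im‖ ^ 2 := by
  simp only [EuclideanSpace.norm_sq_eq, ← Finset.sum_add_distrib]
  refine Finset.sum_congr rfl fun i _ => ?_
  rw [Complex.sq_norm, Complex.normSq_apply]
  simp [sq]

namespace Matrix

variable {n K : Type*} [Fintype n] [DecidableEq n] [Field K] [IsAlgClosed K]

theorem card_roots_charpoly (A : Matrix n n K) :
    Multiset.card A.charpoly.roots = Fintype.card n := by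
  rw [← A.charpoly_natDegree_eq_dim]
  exact (IsAlgClosed.splits A.charpoly).natDegree_eq_card_roots.symm

theorem det_sub_scalar_eq_prod_roots_charpoly (A : Matrix n n K) (z : K) :
    (A - scalar n z).det = (A.charpoly.roots.map (· - z)).prod := by
  rw [← neg_sub, det_neg, ← eval_charpoly,
    (IsAlgClosed.splits _).eval_eq_prod_roots_of_monic A.charpoly_monic,
    ← A.card_roots_charpoly, ← Multiset.card_map (z - ·), ← Multiset.prod_map_neg,
    Multiset.map_map]
  simp

theorem det_aeval_eq_prod_roots_charpoly (A : Matrix n n K) (p : K[X]) :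
    (aeval A p).det = (A.charpoly.roots.map p.eval).prod := by
  set M := A.charpoly.roots
  -- `det ∘ aeval A` is multiplicative on the commutative ring `K[X]`, where `p` factors.
  let φ : K[X] →* K := detMonoidHom.comp (aeval A).toMonoidHom
  have hC (a : K) : φ (C a) = a ^ Fintype.card n := by simp [φ, algebraMap_eq_diagonal]
  have hX_sub_C (z : K) : φ (X - C z) = (M.map (· - z)).prod := by
    show (aeval A (X - C z)).det = _
    rw [aeval_sub, aeval_X, aeval_C]
    exact det_sub_scalar_eq_prod_roots_charpoly A z
  calc (aeval A p).det = φ p := rfl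
    _ = p.leadingCoeff ^ Fintype.card n * (p.roots.map fun z => (M.map (· - z)).prod).prod := by
      conv_lhs => rw [(IsAlgClosed.splits p).eq_prod_roots]
      rw [map_mul, map_multiset_prod, Multiset.map_map, hC]
      simp only [Function.comp_def, hX_sub_C]
    _ = (M.map p.eval).prod := by
      simp_rw [(IsAlgClosed.splits p).eval_eq_prod_roots, Multiset.prod_map_mul]
      rw [Multiset.prod_map_prod_map]
      simp [M, card_roots_charpoly]

theorem charpoly_aeval_eq_prod (A : Matrix n n K) (p : K[X]) :
    (aeval A p).charpoly = (A.charpoly.roots.map fun μ => X - C (p.eval μ)).prod := by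
  refine Polynomial.funext fun x => ?_
  have h : scalar n x - aeval A p = aeval A (C x - p) := by
    simp [algebraMap_eq_diagonal]
  rw [eval_charpoly, h, det_aeval_eq_prod_roots_charpoly, eval_multiset_prod, Multiset.map_map]
  simp

theorem roots_charpoly_aeval (A : Matrix n n K) (p : K[X]) :
    (aeval A p).charpoly.roots = A.charpoly.roots.map p.eval := by
  simpa [charpoly_aeval_eq_prod, Multiset.map_map, Function.comp_def] using
    roots_multiset_prod_X_sub_C (A.charpoly.roots.map p.eval)

theorem trace_aeval_eq_sum_roots_charpoly (A : Matrix n n K) (p : K[X]) :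
    (aeval A p).trace = (A.charpoly.roots.map p.eval).sum := by
  rw [trace_eq_sum_roots_charpoly, roots_charpoly_aeval]

theorem det_one_add_smul_eq_prod_roots_charpoly (A : Matrix n n K) (s : K) :
    (1 + s • A).det = (A.charpoly.roots.map (1 + s * ·)).prod := by
  have h : aeval A (1 + C s * X) = 1 + s • A := by
    simp [Algebra.smul_def]
  rw [← h, det_aeval_eq_prod_roots_charpoly]
  simp

theorem trace_pow_eq_sum_roots_charpoly (A : Matrix n n K) (k : ℕ) :
    (A ^ k).trace = (A.charpoly.roots.map (· ^ k)).sum := by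
  simpa using A.trace_aeval_eq_sum_roots_charpoly (X ^ k)

theorem norm_le_l2_opNorm_of_isRoot_charpoly {𝕜 : Type*} [RCLike 𝕜] (A : Matrix n n 𝕜) {μ : 𝕜}
    (hμ : A.charpoly.IsRoot μ) : ‖μ‖ ≤ ‖toEuclideanCLM (n := n) (𝕜 := 𝕜) A‖ := by
  have h := AlgEquiv.spectrum_eq (toEuclideanCLM (n := n) (𝕜 := 𝕜)) A ▸
    mem_spectrum_iff_isRoot_charpoly.mpr hμ
  exact (spectrum.norm_le_norm_mul_of_mem h).trans
    (mul_le_of_le_one_right (norm_nonneg _) ContinuousLinearMap.norm_id_le)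

theorem l2_opNorm_map_ofReal_le (F : Matrix n n ℝ) :
    ‖toEuclideanCLM (n := n) (𝕜 := ℂ) (F.map Complex.ofReal)‖ ≤
      ‖toEuclideanCLM (n := n) (𝕜 := ℝ) F‖ := by
  set T := toEuclideanCLM (n := n) (𝕜 := ℝ) F
  set S := toEuclideanCLM (n := n) (𝕜 := ℂ) (F.map Complex.ofReal)
  refine ContinuousLinearMap.opNorm_le_bound _ (norm_nonneg _) fun v => ?_
  set x : EuclideanSpace ℝ n := WithLp.toLp 2 fun i => (v i).re
  set y : EuclideanSpace ℝ n := WithLp.toLp 2 fun i => (v i).im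
  have hre : (WithLp.toLp 2 fun i => (S v i).re) = T x := by
    ext i
    simp [S, T, x, mulVec, dotProduct, Complex.re_sum]
  have him : (WithLp.toLp 2 fun i => (S v i).im) = T y := by
    ext i
    simp [S, T, y, mulVec, dotProduct, Complex.im_sum]
  refine le_of_sq_le_sq ?_ (by positivity)
  rw [EuclideanSpace.norm_sq_eq_norm_sq_re_add_norm_sq_im, hre, him,
    mul_pow, EuclideanSpace.norm_sq_eq_norm_sq_re_add_norm_sq_im v, mul_add, ← mul_pow, ← mul_pow]
  gcongr <;> exact T.le_opNorm _

theorem norm_le_of_mem_roots_charpoly_map_ofReal (F : Matrix n n ℝ) {μ : ℂ}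
    (hμ : μ ∈ (F.map Complex.ofReal).charpoly.roots) :
    ‖μ‖ ≤ ‖toEuclideanCLM (n := n) (𝕜 := ℝ) F‖ :=
  (norm_le_l2_opNorm_of_isRoot_charpoly _ (isRoot_of_mem_roots hμ)).trans
    F.l2_opNorm_map_ofReal_le

theorem ofReal_det_one_add_smul (F : Matrix n n ℝ) (t : ℝ) :
    ((1 + t • F).det : ℂ) =
      ((F.map Complex.ofReal).charpoly.roots.map (1 + (t : ℂ) * ·)).prod := by
  rw [← det_one_add_smul_eq_prod_roots_charpoly]
  refine (RingHom.map_det Complex.ofRealHom _).trans (congrArg det ?_)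
  ext i j
  simp [one_apply, apply_ite]

theorem ofReal_trace_pow (F : Matrix n n ℝ) (k : ℕ) :
    ((F ^ k).trace : ℂ) = ((F.map Complex.ofReal).charpoly.roots.map (· ^ k)).sum := by
  rw [← trace_pow_eq_sum_roots_charpoly]
  exact (AddMonoidHom.map_trace Complex.ofRealHom.toAddMonoidHom _).trans
    (congrArg trace (F.map_pow Complex.ofRealHom k))

end Matrix

theorem HasSum.multiset_sum {ι α β : Type*} [AddCommMonoid α] [TopologicalSpace α]
    [ContinuousAdd α] (s : Multiset ι) {f : ι → β → α} {a : ι → α}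
    (h : ∀ i ∈ s, HasSum (f i) (a i)) :
    HasSum (fun b => (s.map fun i => f i b).sum) (s.map a).sum := by
  induction s using Multiset.induction_on with
  | empty => simp
  | cons i s ih =>
    simp only [Multiset.map_cons, Multiset.sum_cons]
    exact (h i (s.mem_cons_self i)).add (ih fun j hj => h j (Multiset.mem_cons_of_mem hj))

namespace Complex

theorem hasSum_taylorSeries_log_succ {z : ℂ} (hz : ‖z‖ < 1) :
    HasSum (fun r : ℕ => (-1) ^ (r + 1 + 1) / (r + 1) * z ^ (r + 1)) (log (1 + z)) := by
  simpa [div_mul_eq_mul_div] using (hasSum_nat_add_iff' 1).mpr (hasSum_taylorSeries_log hz)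

theorem hasSum_taylorSeries_log_multiset_sum {Z : Multiset ℂ} (hZ : ∀ z ∈ Z, ‖z‖ < 1) :
    HasSum (fun r : ℕ => (-1) ^ (r + 1 + 1) / (r + 1) * (Z.map (· ^ (r + 1))).sum)
      (Z.map fun z => log (1 + z)).sum := by
  simpa [Multiset.sum_map_mul_left] using
    HasSum.multiset_sum Z fun z hz => hasSum_taylorSeries_log_succ (hZ z hz)

theorem exp_multiset_sum_log_one_add {Z : Multiset ℂ} (hZ : ∀ z ∈ Z, ‖z‖ < 1) :
    exp (Z.map fun z => log (1 + z)).sum = (Z.map (1 + ·)).prod := by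
  rw [exp_multiset_sum, Multiset.map_map]
  refine congrArg _ (Multiset.map_congr rfl fun z hz => exp_log fun h0 => ?_)
  have : z = -1 := by linear_combination h0
  simpa [this] using hZ z hz

theorem summable_norm_taylorSeries_log_multiset_sum {Z : Multiset ℂ} (hZ : ∀ z ∈ Z, ‖z‖ < 1) :
    Summable fun r : ℕ => ‖(-1) ^ (r + 1 + 1) / (r + 1) * (Z.map (· ^ (r + 1))).sum‖ := by
  have hgeom : Summable fun r : ℕ => (Z.map fun z => ‖z‖ ^ (r + 1)).sum :=
    (HasSum.multiset_sum Z fun z hz => ((summable_nat_add_iff 1).mpr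
      (summable_geometric_of_lt_one (norm_nonneg z) (hZ z hz))).hasSum).summable
  refine hgeom.of_nonneg_of_le (fun _ => norm_nonneg _) fun r => ?_
  calc ‖(-1) ^ (r + 1 + 1) / (r + 1) * (Z.map (· ^ (r + 1))).sum‖
      ≤ 1 * (Z.map fun z => ‖z ^ (r + 1)‖).sum := by
        rw [norm_mul]
        gcongr
        · rw [norm_div, norm_pow, norm_neg, norm_one, one_pow, ← Nat.cast_add_one,
            norm_natCast]
          exact div_le_one_of_le₀ (by simp) (by positivity)
        · exact norm_multiset_sum_le _ |>.trans_eq (by rw [Multiset.map_map]; rfl)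
    _ = (Z.map fun z => ‖z‖ ^ (r + 1)).sum := by simp

theorem pos_and_hasSum_log_of_hasSum_ofReal {a : ℕ → ℝ} {L : ℂ} {x : ℝ}
    (ha : HasSum (fun r => (a r : ℂ)) L) (hx : exp L = x) : 0 < x ∧ HasSum a (Real.log x) := by
  obtain ⟨S, hS⟩ := summable_ofReal.mp ha.summable
  have hL : L = S := ha.unique (hasSum_ofReal.mpr hS)
  rw [hL, ← ofReal_exp, ofReal_inj] at hx
  exact hx ▸ ⟨Real.exp_pos S, (Real.log_exp S).symm ▸ hS⟩

end Complex

/-- The log-determinant trace expansion: for a real `n×n` matrix `F` and `t ∈ ℝ` with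
`|t|·‖F‖ < 1` (operator norm on Euclidean space), `det(I + tF) > 0` and
`log det(I + tF) = Σ_{r≥1} ((−1)^(r+1)/r) tr(Fʳ) tʳ`, the series converging absolutely. -/
theorem log_det_trace_expansion {n : ℕ}
    (F : Matrix (Fin n) (Fin n) ℝ) (t : ℝ)
    (h : |t| * ‖Matrix.toEuclideanCLM (𝕜 := ℝ) F‖ < 1) :
    0 < (1 + t • F).det ∧
    HasSum
      (fun r : ℕ =>
        ((-1 : ℝ) ^ ((r + 1) + 1) / ((r : ℝ) + 1)) * ((F ^ (r + 1)).trace) * t ^ (r + 1))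
      (Real.log (1 + t • F).det) ∧
    Summable
      (fun r : ℕ =>
        |((-1 : ℝ) ^ ((r + 1) + 1) / ((r : ℝ) + 1)) * ((F ^ (r + 1)).trace) * t ^ (r + 1)|) := by
  set Z := (F.map Complex.ofReal).charpoly.roots.map ((t : ℂ) * ·)
  have hZ : ∀ z ∈ Z, ‖z‖ < 1 := by
    simp only [Z, Multiset.mem_map]
    rintro _ ⟨μ, hμ, rfl⟩
    rw [norm_mul, Complex.norm_real, Real.norm_eq_abs]
    exact (mul_le_mul_of_nonneg_left (F.norm_le_of_mem_roots_charpoly_map_ofReal hμ)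
      (abs_nonneg t)).trans_lt h
  have hdet : Complex.exp (Z.map fun z => Complex.log (1 + z)).sum = (1 + t • F).det := by
    rw [Complex.exp_multiset_sum_log_one_add hZ, ofReal_det_one_add_smul, Multiset.map_map]
    rfl
  have hterm (r : ℕ) :
      (((-1 : ℝ) ^ ((r + 1) + 1) / ((r : ℝ) + 1) * (F ^ (r + 1)).trace * t ^ (r + 1) : ℝ) : ℂ) =
        (-1) ^ (r + 1 + 1) / (r + 1) * (Z.map (· ^ (r + 1))).sum := by
    push_cast
    simp only [ofReal_trace_pow, Z, Multiset.map_map, Function.comp_apply, mul_pow,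
      Multiset.sum_map_mul_left]
    ring
  refine and_assoc.mp ⟨Complex.pos_and_hasSum_log_of_hasSum_ofReal ?_ hdet, ?_⟩
  · simpa only [hterm] using Complex.hasSum_taylorSeries_log_multiset_sum hZ
  · simpa only [← hterm, Complex.norm_real, Real.norm_eq_abs] using
      Complex.summable_norm_taylorSeries_log_multiset_sum hZ
end

section
/- Let n ∈ ℕ, let w_1, …, w_n ≥ 0 and Z_1, …, Z_n > 0 be real numbers, let λ > 0, let c ∈ (0,1), let s ∈ ℕ, and let m₁, m₂ be indices with 0 ≤ m₁ < m₂ ≤ n+1 such that λZ_i < c for all i ≤ m₁ and λZ_i > c⁻¹ for all i ≥ m₂. Define f(λ) = Σ_{i=1}^n w_i · λZ_i/(1 + λZ_i), S_r = Σ_{j=1}^{m₁} w_j Z_j^r, and T_r = Σ_{j=m₂}^{n} w_j Z_j^{−r}. Then there exists E ∈ ℝ with |E| ≤ c^{s+1} Σ_{i=1}^n w_i such that f(λ) = Σ_{i=m₁+1}^{m₂−1} w_i · λZ_i/(1 + λZ_i) + Σ_{r=1}^{s} (−1)^{r+1} λ^r S_r + Σ_{r=0}^{s} (−1)^r λ^{−r}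 T_r + E. -/
/-!
For `x = λZᵢ` the summand `x / (1 + x)` is expanded as a truncated geometric series: in powers of
`x` when `x < c`, and in powers of `x⁻¹` (after writing `x / (1 + x) = 1 / (1 + x⁻¹)`) when
`x > c⁻¹`. In both cases the remainder is at most `c ^ (s + 1)` in absolute value, and summing
against the nonnegative weights over the two disjoint index ranges gives the error bound.
-/

open Finset

section Expansion

variable {K : Type*} [Field K]

theorem div_one_add_eq_sum_pow_add (x : K) (hx : 1 + x ≠ 0) (s : ℕ) :
    x / (1 + x) =
      ∑ r ∈ Icc 1 s, (-1) ^ (r + 1) * x ^ r + (-1) ^ s * x ^ (s + 1) / (1 + x) := by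
  induction s with
  | zero => simp
  | succ s ih =>
    rw [sum_Icc_succ_top (by omega), ih]
    field_simp
    ring

theorem div_one_add_eq_sum_inv_pow_add (x : K) (hx₀ : x ≠ 0) (hx : 1 + x ≠ 0) (s : ℕ) :
    x / (1 + x) =
      ∑ r ∈ Icc 0 s, (-1) ^ r * (x ^ r)⁻¹ + (-1) ^ (s + 1) * (x ^ s)⁻¹ / (1 + x) := by
  induction s with
  | zero =>
    simp only [Icc_self, sum_singleton, pow_zero, inv_one, mul_one]
    field_simp
    ring
  | succ s ih =>
    rw [sum_Icc_succ_top (Nat.zero_le _), ih]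
    field_simp
    ring

variable {ι : Type*} (A : Finset ι) (w Z : ι → K) (lam : K) (s : ℕ)

theorem sum_mul_div_one_add_eq_sum_pow_add (h : ∀ i ∈ A, 1 + lam * Z i ≠ 0) :
    ∑ i ∈ A, w i * (lam * Z i) / (1 + lam * Z i) =
      ∑ r ∈ Icc 1 s, (-1) ^ (r + 1) * lam ^ r * ∑ i ∈ A, w i * Z i ^ r +
        ∑ i ∈ A, w i * ((-1) ^ s * (lam * Z i) ^ (s + 1) / (1 + lam * Z i)) := by
  have expand : ∀ i ∈ A, w i * (lam * Z i) / (1 + lam * Z i) =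
      ∑ r ∈ Icc 1 s, (-1) ^ (r + 1) * lam ^ r * (w i * Z i ^ r) +
        w i * ((-1) ^ s * (lam * Z i) ^ (s + 1) / (1 + lam * Z i)) := by
    intro i hi
    rw [mul_div_assoc, div_one_add_eq_sum_pow_add _ (h i hi), mul_add, mul_sum]
    congr 1
    exact sum_congr rfl fun r _ => by ring
  simp only [sum_congr rfl expand, sum_add_distrib, mul_sum]
  rw [sum_comm]

theorem sum_mul_div_one_add_eq_sum_inv_pow_add (h₀ : ∀ i ∈ A, lam * Z i ≠ 0)
    (h : ∀ i ∈ A, 1 + lam * Z i ≠ 0) :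
    ∑ i ∈ A, w i * (lam * Z i) / (1 + lam * Z i) =
      ∑ r ∈ Icc 0 s, (-1) ^ r * (lam ^ r)⁻¹ * ∑ i ∈ A, w i * (Z i ^ r)⁻¹ +
        ∑ i ∈ A, w i * ((-1) ^ (s + 1) * ((lam * Z i) ^ s)⁻¹ / (1 + lam * Z i)) := by
  have expand : ∀ i ∈ A, w i * (lam * Z i) / (1 + lam * Z i) =
      ∑ r ∈ Icc 0 s, (-1) ^ r * (lam ^ r)⁻¹ * (w i * (Z i ^ r)⁻¹) +
        w i * ((-1) ^ (s + 1) * ((lam * Z i) ^ s)⁻¹ / (1 + lam * Z i)) := by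
    intro i hi
    rw [mul_div_assoc, div_one_add_eq_sum_inv_pow_add _ (h₀ i hi) (h i hi), mul_add, mul_sum]
    congr 1
    exact sum_congr rfl fun r _ => by rw [mul_pow, mul_inv]; ring
  simp only [sum_congr rfl expand, sum_add_distrib, mul_sum]
  rw [sum_comm]

end Expansion

section Remainder

variable {K : Type*} [Field K] [LinearOrder K] [IsStrictOrderedRing K]

theorem abs_neg_one_pow_mul_pow_succ_div_one_add_le {x c : K} (hx : 0 ≤ x) (hxc : x ≤ c)
    (s : ℕ) : |(-1) ^ s * x ^ (s + 1) / (1 + x)| ≤ c ^ (s + 1) := by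
  rw [abs_div, abs_mul, abs_pow, abs_neg, abs_one, one_pow, one_mul, abs_of_nonneg (by positivity),
    abs_of_pos (by positivity)]
  calc x ^ (s + 1) / (1 + x) ≤ x ^ (s + 1) := div_le_self (by positivity) (by linarith)
    _ ≤ c ^ (s + 1) := pow_le_pow_left₀ hx hxc _

theorem abs_neg_one_pow_mul_inv_pow_div_one_add_le {x c : K} (hc : 0 < c) (hxc : c⁻¹ ≤ x)
    (s : ℕ) : |(-1) ^ (s + 1) * (x ^ s)⁻¹ / (1 + x)| ≤ c ^ (s + 1) := by
  have hx : 0 < x := (inv_pos.mpr hc).trans_le hxc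
  rw [abs_div, abs_mul, abs_pow, abs_neg, abs_one, one_pow, one_mul, abs_of_pos (by positivity),
    abs_of_pos (by positivity), inv_div_left]
  calc ((1 + x) * x ^ s)⁻¹ ≤ (x ^ (s + 1))⁻¹ := by
        gcongr
        rw [pow_succ']
        gcongr
        linarith
    _ ≤ ((c⁻¹) ^ (s + 1))⁻¹ := by gcongr
    _ = c ^ (s + 1) := by rw [inv_pow, inv_inv]

variable {ι : Type*} {A : Finset ι} {w R : ι → K} {B : K}

theorem abs_sum_mul_le_mul_sum (hw : ∀ i ∈ A, 0 ≤ w i) (hR : ∀ i ∈ A, |R i| ≤ B) :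
    |∑ i ∈ A, w i * R i| ≤ B * ∑ i ∈ A, w i := by
  rw [mul_sum]
  refine (abs_sum_le_sum_abs _ _).trans (sum_le_sum fun i hi => ?_)
  rw [abs_mul, abs_of_nonneg (hw i hi), mul_comm]
  exact mul_le_mul_of_nonneg_right (hR i hi) (hw i hi)

variable (A w) (Z : ι → K) (lam c : K) (s : ℕ)

theorem exists_sum_mul_div_one_add_eq_sum_pow_add_of_le (hw : ∀ i ∈ A, 0 ≤ w i)
    (hx : ∀ i ∈ A, 0 ≤ lam * Z i ∧ lam * Z i ≤ c) :
    ∃ E : K, |E| ≤ c ^ (s + 1) * ∑ i ∈ A, w i ∧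
      ∑ i ∈ A, w i * (lam * Z i) / (1 + lam * Z i) =
        ∑ r ∈ Icc 1 s, (-1) ^ (r + 1) * lam ^ r * ∑ i ∈ A, w i * Z i ^ r + E :=
  ⟨_, abs_sum_mul_le_mul_sum hw fun i hi =>
      abs_neg_one_pow_mul_pow_succ_div_one_add_le (hx i hi).1 (hx i hi).2 s,
    sum_mul_div_one_add_eq_sum_pow_add A w Z lam s fun i hi => by linarith [(hx i hi).1]⟩

theorem exists_sum_mul_div_one_add_eq_sum_inv_pow_add_of_inv_le (hc : 0 < c)
    (hw : ∀ i ∈ A, 0 ≤ w i) (hx : ∀ i ∈ A, c⁻¹ ≤ lam * Z i) :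
    ∃ E : K, |E| ≤ c ^ (s + 1) * ∑ i ∈ A, w i ∧
      ∑ i ∈ A, w i * (lam * Z i) / (1 + lam * Z i) =
        ∑ r ∈ Icc 0 s, (-1) ^ r * (lam ^ r)⁻¹ * ∑ i ∈ A, w i * (Z i ^ r)⁻¹ + E := by
  have hpos : ∀ i ∈ A, 0 < lam * Z i := fun i hi => (inv_pos.mpr hc).trans_le (hx i hi)
  exact ⟨_, abs_sum_mul_le_mul_sum hw fun i hi =>
      abs_neg_one_pow_mul_inv_pow_div_one_add_le hc (hx i hi) s,
    sum_mul_div_one_add_eq_sum_inv_pow_add A w Z lam s (fun i hi => (hpos i hi).ne')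
      fun i hi => by linarith [hpos i hi]⟩

end Remainder

theorem sum_Icc_one_eq_add_add {M : Type*} [AddCommMonoid M] (f : ℕ → M) {m₁ m₂ n : ℕ}
    (hm : m₁ < m₂) (hm₂ : m₂ ≤ n + 1) :
    ∑ i ∈ Icc 1 n, f i =
      ∑ i ∈ Icc 1 m₁, f i + ∑ i ∈ Icc (m₁ + 1) (m₂ - 1), f i + ∑ i ∈ Icc m₂ n, f i := by
  rw [← Ico_add_one_right_eq_Icc, ← sum_Ico_consecutive f (by omega : 1 ≤ m₂) hm₂,
    ← sum_Ico_consecutive f (by omega : 1 ≤ m₁ + 1) hm, Ico_add_one_right_eq_Icc,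
    ← Ico_add_one_right_eq_Icc (m₁ + 1), Nat.sub_add_cancel (by omega : 1 ≤ m₂),
    Ico_add_one_right_eq_Icc]

theorem f_expansion_general
    (n : ℕ) (w Z : ℕ → ℝ)
    (hw : ∀ i ∈ Icc 1 n, 0 ≤ w i) (hZ : ∀ i ∈ Icc 1 n, 0 < Z i)
    (lam : ℝ) (hlam : 0 < lam)
    (c : ℝ) (hc0 : 0 < c)
    (s : ℕ)
    (m₁ m₂ : ℕ) (hm : m₁ < m₂) (hm₂ : m₂ ≤ n + 1)
    (hsmall : ∀ i, 1 ≤ i → i ≤ m₁ → lam * Z i < c)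
    (hlarge : ∀ i, m₂ ≤ i → i ≤ n → lam * Z i > c⁻¹)
    (f : ℝ) (hf : f = ∑ i ∈ Icc 1 n, w i * (lam * Z i) / (1 + lam * Z i))
    (S T : ℕ → ℝ)
    (hS : ∀ r, S r = ∑ j ∈ Icc 1 m₁, w j * Z j ^ r)
    (hT : ∀ r, T r = ∑ j ∈ Icc m₂ n, w j * (Z j ^ r)⁻¹) :
    ∃ E : ℝ, |E| ≤ c ^ (s + 1) * ∑ i ∈ Icc 1 n, w i ∧
      f = (∑ i ∈ Icc (m₁ + 1) (m₂ - 1), w i * (lam * Z i) / (1 + lam * Z i))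
          + (∑ r ∈ Icc 1 s, (-1 : ℝ) ^ (r + 1) * lam ^ r * S r)
          + (∑ r ∈ Icc 0 s, (-1 : ℝ) ^ r * (lam ^ r)⁻¹ * T r)
          + E := by
  have hsubA : Icc 1 m₁ ⊆ Icc 1 n := Icc_subset_Icc le_rfl (by omega)
  have hsubB : Icc m₂ n ⊆ Icc 1 n := Icc_subset_Icc (by omega) le_rfl
  obtain ⟨E₁, hE₁, h₁⟩ := exists_sum_mul_div_one_add_eq_sum_pow_add_of_le (Icc 1 m₁) w Z lam c s
    (fun i hi => hw i (hsubA hi)) fun i hi =>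
      ⟨(mul_pos hlam (hZ i (hsubA hi))).le,
        (hsmall i (mem_Icc.mp hi).1 (mem_Icc.mp hi).2).le⟩
  obtain ⟨E₂, hE₂, h₂⟩ := exists_sum_mul_div_one_add_eq_sum_inv_pow_add_of_inv_le (Icc m₂ n) w Z
    lam c s hc0 (fun i hi => hw i (hsubB hi)) fun i hi =>
      (hlarge i (mem_Icc.mp hi).1 (mem_Icc.mp hi).2).le
  have hmass : ∑ i ∈ Icc 1 m₁, w i + ∑ i ∈ Icc m₂ n, w i ≤ ∑ i ∈ Icc 1 n, w i := by
    rw [sum_Icc_one_eq_add_add w hm hm₂]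
    have hmiddle : 0 ≤ ∑ i ∈ Icc (m₁ + 1) (m₂ - 1), w i :=
      sum_nonneg fun i hi => hw i (by simp only [mem_Icc] at hi ⊢; omega)
    linarith
  refine ⟨E₁ + E₂, ?_, ?_⟩
  · calc |E₁ + E₂| ≤ |E₁| + |E₂| := abs_add_le _ _
      _ ≤ c ^ (s + 1) * (∑ i ∈ Icc 1 m₁, w i + ∑ i ∈ Icc m₂ n, w i) := by linarith
      _ ≤ c ^ (s + 1) * ∑ i ∈ Icc 1 n, w i := by gcongr
  · rw [hf, sum_Icc_one_eq_add_add _ hm hm₂, h₁, h₂]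
    simp only [hS, hT]
    ring

/-- First Appendix lemma of the paper: expansion of
`f(λ) = Σᵢ wᵢ λZᵢ/(1+λZᵢ)` in powers of `λ` (over indices with `λZᵢ < c`) and
`λ⁻¹` (over indices with `λZᵢ > c⁻¹`), with error bound `|E| ≤ c^(s+1) Σᵢ wᵢ`. -/
theorem f_expansion
    (n : ℕ) (w Z : ℕ → ℝ)
    (hw : ∀ i ∈ Icc 1 n, 0 ≤ w i) (hZ : ∀ i ∈ Icc 1 n, 0 < Z i)
    (lam : ℝ) (hlam : 0 < lam)
    (c : ℝ) (hc0 : 0 < c) (hc1 : c < 1)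
    (s : ℕ)
    (m₁ m₂ : ℕ) (hm : m₁ < m₂) (hm₂ : m₂ ≤ n + 1)
    (hsmall : ∀ i, 1 ≤ i → i ≤ m₁ → lam * Z i < c)
    (hlarge : ∀ i, m₂ ≤ i → i ≤ n → lam * Z i > c⁻¹)
    (f : ℝ) (hf : f = ∑ i ∈ Icc 1 n, w i * (lam * Z i) / (1 + lam * Z i))
    (S T : ℕ → ℝ)
    (hS : ∀ r, S r = ∑ j ∈ Icc 1 m₁, w j * Z j ^ r)
    (hT : ∀ r, T r = ∑ j ∈ Icc m₂ n, w j * (Z j ^ r)⁻¹) :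
    ∃ E : ℝ, |E| ≤ c ^ (s + 1) * ∑ i ∈ Icc 1 n, w i ∧
      f = (∑ i ∈ Icc (m₁ + 1) (m₂ - 1), w i * (lam * Z i) / (1 + lam * Z i))
          + (∑ r ∈ Icc 1 s, (-1 : ℝ) ^ (r + 1) * lam ^ r * S r)
          + (∑ r ∈ Icc 0 s, (-1 : ℝ) ^ r * (lam ^ r)⁻¹ * T r)
          + E :=
  f_expansion_general n w Z hw hZ lam hlam c hc0 s m₁ m₂ hm hm₂ hsmall hlarge f hf S T hS hT
end

section
/- Let n ∈ ℕ, let U be an n×n complex unitary matrix, let a_1, …, a_n be nonzero complex numbers and ℓ_1, …, ℓ_n nonnegative real numbers, and set A = U·diag(a)·Uᴴ and L = U·diag(ℓ)·Uᴴ, where Uᴴ denotes the conjugate transpose. Let y ∈ ℂⁿ, let λ > 0 be real, and set Z_i = ℓ_i/|a_i|² and ŷ = Uᴴy. Then AᴴA + λL is invertible and yᴴy − (Aᴴy)ᴴ(AᴴA + λL)⁻¹(Aᴴy) = Σ_{i=1}^n |ŷ_i|² · λZ_i/(1 + λZ_i). -/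
open Matrix

/-!
Conjugation by the unitary `U` is a ⋆-algebra automorphism of the matrix algebra, so
`d ↦ U diag(d) Uᴴ` is a ⋆-algebra homomorphism from `ℂⁿ` with pointwise operations. Hence
`AᴴA + λL` is the image of `|a|² + λℓ`, its inverse is the image of the pointwise inverse, and
`yᴴy − (Aᴴy)ᴴ(AᴴA + λL)⁻¹(Aᴴy) = yᴴ (1 − A (AᴴA + λL)⁻¹ Aᴴ) y` is the quadratic form of the image
of `1 − |a|²/(|a|² + λℓ) = λZ/(1 + λZ)`, which in the coordinates `ŷ = Uᴴy` is a weighted sum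
of the `|ŷᵢ|²`.
-/

namespace Matrix

variable {ι α : Type*} [Fintype ι] [DecidableEq ι]

omit [DecidableEq ι] in
theorem star_mulVec_dotProduct_mulVec_mulVec [CommSemiring α] [StarRing α]
    (B C : Matrix ι ι α) (y : ι → α) :
    star (B *ᵥ y) ⬝ᵥ C *ᵥ B *ᵥ y = star y ⬝ᵥ (Bᴴ * C * B) *ᵥ y := by
  rw [star_mulVec, ← dotProduct_mulVec, mulVec_mulVec, mulVec_mulVec, Matrix.mul_assoc]

section CommRing

variable [CommRing α] [StarRing α]

def diagonalStarAlgHom : (ι → α) →⋆ₐ[α] Matrix ι ι α :=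
  { diagonalAlgHom α with map_star' := fun v => (diagonal_conjTranspose v).symm }

def unitaryDiagonal (U : unitaryGroup ι α) : (ι → α) →⋆ₐ[α] Matrix ι ι α :=
  (Unitary.conjStarAlgAut α _ U).toStarAlgHom.comp diagonalStarAlgHom

theorem unitaryDiagonal_apply (U : unitaryGroup ι α) (d : ι → α) :
    unitaryDiagonal U d = U * diagonal d * (U : Matrix ι ι α)ᴴ :=
  rfl

theorem conjTranspose_mul_add_smul_unitaryDiagonal (U : unitaryGroup ι α) (a l : ι → α) (c : α) :
    (unitaryDiagonal U a)ᴴ * unitaryDiagonal U a + c • unitaryDiagonal U l =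
      unitaryDiagonal U (star a * a + c • l) := by
  rw [← star_eq_conjTranspose, ← map_star, ← map_mul, ← map_smul, ← map_add]

theorem star_dotProduct_unitaryDiagonal_mulVec (U : unitaryGroup ι α) (d y : ι → α) :
    star y ⬝ᵥ unitaryDiagonal U d *ᵥ y =
      ∑ i, star (((U : Matrix ι ι α)ᴴ *ᵥ y) i) * (d i * ((U : Matrix ι ι α)ᴴ *ᵥ y) i) := by
  have hstar : star y ᵥ* (U : Matrix ι ι α) = star ((U : Matrix ι ι α)ᴴ *ᵥ y) := by
    rw [star_mulVec, conjTranspose_conjTranspose]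
  rw [unitaryDiagonal_apply, ← mulVec_mulVec, ← mulVec_mulVec, dotProduct_mulVec, hstar]
  simp only [dotProduct, mulVec_diagonal, Pi.star_apply]

end CommRing

section Field

variable [Field α] [StarRing α]

theorem isUnit_unitaryDiagonal (U : unitaryGroup ι α) {d : ι → α} (hd : ∀ i, d i ≠ 0) :
    IsUnit (unitaryDiagonal U d) :=
  (Pi.isUnit_iff.2 fun i => (hd i).isUnit).map _

theorem inv_unitaryDiagonal (U : unitaryGroup ι α) {d : ι → α} (hd : ∀ i, d i ≠ 0) :
    (unitaryDiagonal U d)⁻¹ = unitaryDiagonal U d⁻¹ := by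
  refine inv_eq_left_inv ?_
  rw [← map_mul, ← map_one (unitaryDiagonal U)]
  congr 1
  funext i
  exact inv_mul_cancel₀ (hd i)

-- The paper's `f(λ)`; when `AᴴA + cL` is positive definite it is the minimum over `x` of
-- `‖A x - y‖² + c xᴴ L x`, attained at `x = (AᴴA + cL)⁻¹ Aᴴ y`.
noncomputable def tikhonovMisfit (A L : Matrix ι ι α) (c : α) (y : ι → α) : α :=
  star y ⬝ᵥ y - star (Aᴴ *ᵥ y) ⬝ᵥ (Aᴴ * A + c • L)⁻¹ *ᵥ Aᴴ *ᵥ y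

theorem tikhonovMisfit_unitaryDiagonal (U : unitaryGroup ι α) (a l : ι → α) (c : α)
    (hd : ∀ i, star (a i) * a i + c * l i ≠ 0) (y : ι → α) :
    tikhonovMisfit (unitaryDiagonal U a) (unitaryDiagonal U l) c y =
      ∑ i, star (((U : Matrix ι ι α)ᴴ *ᵥ y) i) *
        ((1 - a i * (star (a i) * a i + c * l i)⁻¹ * star (a i)) *
          ((U : Matrix ι ι α)ᴴ *ᵥ y) i) := by
  calc tikhonovMisfit (unitaryDiagonal U a) (unitaryDiagonal U l) c y
      = star y ⬝ᵥ unitaryDiagonal U (1 - a * (star a * a + c • l)⁻¹ * star a) *ᵥ y := by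
        rw [tikhonovMisfit, star_mulVec_dotProduct_mulVec_mulVec,
          conjTranspose_mul_add_smul_unitaryDiagonal,
          inv_unitaryDiagonal (d := star a * a + c • l) U hd,
          conjTranspose_conjTranspose, ← star_eq_conjTranspose, ← map_star, ← map_mul, ← map_mul,
          map_sub, map_one, sub_mulVec, one_mulVec, dotProduct_sub]
    _ = _ := star_dotProduct_unitaryDiagonal_mulVec U _ y

end Field

end Matrix

theorem Complex.one_sub_mul_inv_mul_star {a : ℂ} (ha : a ≠ 0) {c t : ℝ}
    (h : ‖a‖ ^ 2 + c * t ≠ 0) :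
    1 - a * (star a * a + c * t)⁻¹ * star a =
      ((c * (t / ‖a‖ ^ 2) / (1 + c * (t / ‖a‖ ^ 2)) : ℝ) : ℂ) := by
  have ha' : (‖a‖ : ℂ) ≠ 0 := by exact_mod_cast norm_ne_zero_iff.2 ha
  have h' : (‖a‖ : ℂ) ^ 2 + c * t ≠ 0 := by exact_mod_cast h
  rw [mul_right_comm, Complex.star_def, Complex.mul_conj', Complex.conj_mul']
  push_cast
  field_simp
  ring

/-- In the periodic model, with `A = U diag(a) Uᴴ` and `L = U diag(ℓ) Uᴴ` simultaneously
diagonalized by a unitary `U`, the data-misfit function satisfies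
`yᴴy − (Aᴴy)ᴴ(AᴴA + λL)⁻¹(Aᴴy) = Σᵢ |ŷᵢ|² λZᵢ/(1+λZᵢ)` where `Zᵢ = ℓᵢ/|aᵢ|²`, `ŷ = Uᴴy`. -/
theorem f_diagonalized {n : ℕ}
    (U : Matrix (Fin n) (Fin n) ℂ) (hU : U ∈ Matrix.unitaryGroup (Fin n) ℂ)
    (a : Fin n → ℂ) (ha : ∀ i, a i ≠ 0)
    (ℓ : Fin n → ℝ) (hℓ : ∀ i, 0 ≤ ℓ i)
    (A L : Matrix (Fin n) (Fin n) ℂ)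
    (hA : A = U * Matrix.diagonal a * Uᴴ)
    (hL : L = U * Matrix.diagonal (fun i => (ℓ i : ℂ)) * Uᴴ)
    (y : Fin n → ℂ) (lam : ℝ) (hlam : 0 < lam)
    (Z : Fin n → ℝ) (hZ : ∀ i, Z i = ℓ i / ‖a i‖ ^ 2)
    (yhat : Fin n → ℂ) (hyhat : yhat = Uᴴ.mulVec y) :
    IsUnit (Aᴴ * A + (lam : ℂ) • L).det ∧
    star y ⬝ᵥ y
        - star (Aᴴ.mulVec y) ⬝ᵥ (Aᴴ * A + (lam : ℂ) • L)⁻¹.mulVec (Aᴴ.mulVec y)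
      = ((∑ i, ‖yhat i‖ ^ 2 * (lam * Z i) / (1 + lam * Z i) : ℝ) : ℂ) := by
  set u : unitaryGroup (Fin n) ℂ := ⟨U, hU⟩
  have hA' : A = unitaryDiagonal u a := hA
  have hL' : L = unitaryDiagonal u fun i => (ℓ i : ℂ) := hL
  have hd : ∀ i, ‖a i‖ ^ 2 + lam * ℓ i ≠ 0 := fun i =>
    (add_pos_of_pos_of_nonneg (pow_pos (norm_pos_iff.2 (ha i)) 2) (mul_nonneg hlam.le (hℓ i))).ne'
  have hd' : ∀ i, star (a i) * a i + lam * (ℓ i : ℂ) ≠ 0 := fun i => by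
    rw [Complex.star_def, Complex.conj_mul']
    exact_mod_cast hd i
  rw [hA', hL']
  refine ⟨?_, ?_⟩
  · rw [conjTranspose_mul_add_smul_unitaryDiagonal, ← isUnit_iff_isUnit_det]
    exact isUnit_unitaryDiagonal u hd'
  · change tikhonovMisfit _ _ _ y = _
    rw [tikhonovMisfit_unitaryDiagonal u a _ _ hd', ← hyhat, Complex.ofReal_sum]
    refine Finset.sum_congr rfl fun i _ => ?_
    rw [Complex.one_sub_mul_inv_mul_star (ha i) (hd i), ← hZ, mul_left_comm, Complex.star_def,
      Complex.conj_mul']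
    push_cast
    ring
end

section
/- Let n ∈ ℕ, let f, g : ℝ → ℝ be functions, let α_γ, α_δ, β_γ, β_δ > 0 be real constants, and define h : (0,∞) × (0,∞) → ℝ by h(γ, δ) = δ^{n/2} · exp( −(1/2) g(δ/γ) − (γ/2) f(δ/γ) ) · γ^{α_γ − 1} e^{−β_γ γ} · δ^{α_δ − 1} e^{−β_δ δ}. Fix φ ∈ (0, π/2). Then there exists a constant C > 0 (explicitly, C = (cos φ)^{α_γ − 1} (sin φ)^{n/2 + α_δ − 1} exp(−(1/2) g(tan φ))) such that for every r > 0, r · h(r cos φ, r sin φ) = C · r^{n/2 + α_γ + α_δ − 1} · exp( −r · ( (cos φ / 2) f(tan φ) + β_γ cos φ + β_δ sin φ ) ). In particular, as a function of r this is proportional to the density of the Gamma distribution with shape n/2 + α_γ + α_δ and rate (cos φ / 2) f(tan φ) + β_γ cos φ + β_δ sin φ. -/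
open Real

/-! In polar coordinates the ratio `δ / γ = tan φ` does not depend on `r`, so `g(δ/γ)` and the
coefficient `f(δ/γ)` are constants along a ray. What remains is a product of powers of
`r cos φ` and `r sin φ`, homogeneous in `r`, times exponentials whose exponents are linear in
`r`: together with the Jacobian `r` this is a Gamma kernel in `r`. -/

lemma mul_mul_rpow_mul_mul_rpow {r c s : ℝ} (hr : 0 < r) (hc : 0 ≤ c) (hs : 0 ≤ s) (a b : ℝ) :
    r * ((r * s) ^ a * (r * c) ^ b) = c ^ b * s ^ a * r ^ (a + b + 1) := by
  rw [mul_rpow hr.le hs, mul_rpow hr.le hc, rpow_add hr, rpow_add hr, rpow_one]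
  ring

lemma exp_mul_exp_mul_exp_polar (r c s u v βγ βδ : ℝ) :
    exp (-(1/2) * v - (r * c / 2) * u) * exp (-βγ * (r * c)) * exp (-βδ * (r * s))
      = exp (-(1/2) * v) * exp (-r * ((c / 2) * u + βγ * c + βδ * s)) := by
  rw [← exp_add, ← exp_add, ← exp_add]
  congr 1
  ring

theorem polar_gamma_conditional_general
    (n : ℕ) (f g : ℝ → ℝ) (αγ αδ βγ βδ : ℝ)
    (h : ℝ → ℝ → ℝ)
    (hh : ∀ γ δ : ℝ, 0 < γ → 0 < δ →
      h γ δ = δ ^ ((n : ℝ) / 2)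
        * Real.exp (-(1/2) * g (δ / γ) - (γ / 2) * f (δ / γ))
        * (γ ^ (αγ - 1) * Real.exp (-βγ * γ))
        * (δ ^ (αδ - 1) * Real.exp (-βδ * δ)))
    (φ : ℝ) (hφ₁ : 0 < φ) (hφ₂ : φ < Real.pi / 2) :
    ∃ C : ℝ, 0 < C ∧
      C = Real.cos φ ^ (αγ - 1) * Real.sin φ ^ ((n : ℝ) / 2 + αδ - 1)
            * Real.exp (-(1/2) * g (Real.tan φ)) ∧
      ∀ r : ℝ, 0 < r →
        r * h (r * Real.cos φ) (r * Real.sin φ)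
          = C * r ^ ((n : ℝ) / 2 + αγ + αδ - 1)
              * Real.exp (-r * ((Real.cos φ / 2) * f (Real.tan φ)
                  + βγ * Real.cos φ + βδ * Real.sin φ)) := by
  have hc : 0 < cos φ := cos_pos_of_mem_Ioo ⟨by linarith [pi_pos], hφ₂⟩
  have hs : 0 < sin φ := sin_pos_of_pos_of_lt_pi hφ₁ (by linarith [pi_pos])
  refine ⟨_, by positivity, rfl, fun r hr => ?_⟩
  have hγ : 0 < r * cos φ := mul_pos hr hc
  have hδ : 0 < r * sin φ := mul_pos hr hs
  have hratio : r * sin φ / (r * cos φ) = tan φ := by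
    rw [mul_div_mul_left _ _ hr.ne', tan_eq_sin_div_cos]
  have hδpow : (r * sin φ) ^ ((n : ℝ) / 2) * (r * sin φ) ^ (αδ - 1)
      = (r * sin φ) ^ ((n : ℝ) / 2 + αδ - 1) := by
    rw [← rpow_add hδ, add_sub_assoc]
  calc r * h (r * cos φ) (r * sin φ)
      = r * ((r * sin φ) ^ ((n : ℝ) / 2 + αδ - 1) * (r * cos φ) ^ (αγ - 1))
          * (exp (-(1/2) * g (tan φ) - (r * cos φ / 2) * f (tan φ))
            * exp (-βγ * (r * cos φ)) * exp (-βδ * (r * sin φ))) := by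
        rw [hh _ _ hγ hδ, hratio, ← hδpow]
        ring
    _ = _ := by
        rw [mul_mul_rpow_mul_mul_rpow hr hc.le hs.le, exp_mul_exp_mul_exp_polar,
          show (n : ℝ) / 2 + αδ - 1 + (αγ - 1) + 1 = (n : ℝ) / 2 + αγ + αδ - 1 by ring]
        ring

/-- In polar coordinates `γ = r cos φ`, `δ = r sin φ`, the marginal posterior density
`h(γ,δ) = δ^(n/2) exp(−½g(δ/γ) − (γ/2)f(δ/γ)) γ^(αγ−1)e^(−βγ γ) δ^(αδ−1)e^(−βδ δ)`
times the Jacobian factor `r` is, as a function of `r`, proportional to a Gamma density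
with shape `n/2 + αγ + αδ` and rate `(cos φ/2) f(tan φ) + βγ cos φ + βδ sin φ`. -/
theorem polar_gamma_conditional
    (n : ℕ) (f g : ℝ → ℝ) (αγ αδ βγ βδ : ℝ)
    (hαγ : 0 < αγ) (hαδ : 0 < αδ) (hβγ : 0 < βγ) (hβδ : 0 < βδ)
    (h : ℝ → ℝ → ℝ)
    (hh : ∀ γ δ : ℝ, 0 < γ → 0 < δ →
      h γ δ = δ ^ ((n : ℝ) / 2)
        * Real.exp (-(1/2) * g (δ / γ) - (γ / 2) * f (δ / γ))
        * (γ ^ (αγ - 1) * Real.exp (-βγ * γ))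
        * (δ ^ (αδ - 1) * Real.exp (-βδ * δ)))
    (φ : ℝ) (hφ₁ : 0 < φ) (hφ₂ : φ < Real.pi / 2) :
    ∃ C : ℝ, 0 < C ∧
      C = Real.cos φ ^ (αγ - 1) * Real.sin φ ^ ((n : ℝ) / 2 + αδ - 1)
            * Real.exp (-(1/2) * g (Real.tan φ)) ∧
      ∀ r : ℝ, 0 < r →
        r * h (r * Real.cos φ) (r * Real.sin φ)
          = C * r ^ ((n : ℝ) / 2 + αγ + αδ - 1)
              * Real.exp (-r * ((Real.cos φ / 2) * f (Real.tan φ)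
                  + βγ * Real.cos φ + βδ * Real.sin φ)) :=
  polar_gamma_conditional_general n f g αγ αδ βγ βδ h hh φ hφ₁ hφ₂
end
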